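/- arXiv:1903.00418 — 2 statements merged into one kernel-verified Lean document; each statement's English description precedes it below -/
import Mathlib

section
/- For every n ≥ 1, the difference between the expansion of (1/(1-z))ⁿ as a power series in z (around 0) and its expansion as a power series in z⁻¹ (around ∞) equals δ^{(n-1)}(z)/(n-1)!, where δ(z) = Σ_{m∈ℤ} z^m and δ^{(k)} denotes the k-th formal derivative. -/
/-!
Writing `δ^{(k)}(z)/k! = Σ_m c_m z^m`, the coefficient `c_m` is the ascending Pochhammer symbol
`(m+1)(m+2)⋯(m+k)` divided by `k!`, i.e. the generalized binomial coefficient `binom(m+k, k)`.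
The expansion of `(1-z)^{-(k+1)}` at `0` has coefficient `binom(m+k, k)` at `z^m` for `m ≥ 0`.
The one at `∞` is `(-1)^{k+1} w^{k+1}(1-w)^{-(k+1)}` in `w = z⁻¹`, with coefficient
`(-1)^{k+1} binom(j, k)` at `z^{-(j+1)}`; subtracting it leaves `(-1)^k binom(j, k)`, which the
negation rule `binom(-r, k) = (-1)^k binom(r+k-1, k)` identifies with `binom(k-(j+1), k)`.
-/

open PowerSeries

/-- The formal derivative on formal distributions `Σ_m a_m z^m ∈ F[[z,z⁻¹]]`
(identified with their coefficient families `ℤ → F`): `z^m ↦ m z^{m-1}`, i.e. the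
coefficient of `z^m` in the derivative is `(m+1) a_{m+1}`. -/
def Dop {F : Type*} [Ring F] (f : ℤ → F) : ℤ → F := fun m => ((m + 1 : ℤ) : F) * f (m + 1)

theorem Dop_iterate_one_apply {F : Type*} [Ring F] (k : ℕ) (m : ℤ) :
    (Dop^[k] (fun _ => (1 : F))) m = (((ascPochhammer ℤ k).eval (m + 1) : ℤ) : F) := by
  induction k generalizing m with
  | zero => simp
  | succ k ih =>
    rw [Function.iterate_succ_apply', Dop, ih, ascPochhammer_succ_left]
    simp [add_assoc, one_add_one_eq_two]

theorem ascPochhammer_eval_add_one_eq_factorial_mul_choose (k : ℕ) (m : ℤ) :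
    (ascPochhammer ℤ k).eval (m + 1) = k.factorial * Ring.choose (m + k) k := by
  rw [← Polynomial.ascPochhammer_smeval_eq_eval,
    ← Ring.factorial_nsmul_multichoose_eq_ascPochhammer, Ring.multichoose_eq, nsmul_eq_mul,
    add_right_comm, add_sub_cancel_right]

theorem Ring.choose_natCast_sub_succ (j k : ℕ) :
    Ring.choose ((k : ℤ) - (j + 1)) k = (-1) ^ k * j.choose k := by
  have hneg := Ring.choose_neg ((j : ℤ) + 1 - k) k
  rw [neg_sub, show (j : ℤ) + 1 - k + k - 1 = j by ring, Ring.choose_natCast] at hneg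
  rw [hneg, Units.smul_def, Int.coe_negOnePow_natCast, smul_eq_mul]

section Expansions

variable {R : Type*} [CommRing R]

theorem coeff_mk_one_pow_succ (k a : ℕ) :
    coeff a ((mk fun _ => (1 : R)) ^ (k + 1)) = (k + a).choose k := by
  rw [show (mk fun _ => (1 : R)) = mk 1 from rfl, mk_one_pow_eq_mk_choose_add, coeff_mk]

theorem coeff_X_pow_mul_mk_one_pow_succ (k n : ℕ) :
    coeff n ((X : R⟦X⟧) ^ k * (mk fun _ => (1 : R)) ^ (k + 1)) = n.choose k := by
  rw [coeff_X_pow_mul']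
  split_ifs with h
  · rw [coeff_mk_one_pow_succ, Nat.add_sub_cancel' h]
  · rw [Nat.choose_eq_zero_of_lt (not_le.mp h), Nat.cast_zero]

theorem neg_X_mul_mk_one_pow_succ (k : ℕ) :
    (-(X * mk fun _ => (1 : R))) ^ (k + 1) =
      X * (C ((-1) ^ (k + 1)) * (X ^ k * (mk fun _ => (1 : R)) ^ (k + 1))) := by
  rw [neg_pow, mul_pow, map_pow, map_neg, map_one]
  ring

theorem coeff_zero_neg_X_mul_mk_one_pow_succ (k : ℕ) :
    coeff 0 ((-(X * mk fun _ => (1 : R))) ^ (k + 1)) = 0 := by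
  rw [neg_X_mul_mk_one_pow_succ, coeff_zero_X_mul]

theorem coeff_succ_neg_X_mul_mk_one_pow_succ (k j : ℕ) :
    coeff (j + 1) ((-(X * mk fun _ => (1 : R))) ^ (k + 1)) = (-1 : R) ^ (k + 1) * j.choose k := by
  rw [neg_X_mul_mk_one_pow_succ, coeff_succ_X_mul, coeff_C_mul,
    coeff_X_pow_mul_mk_one_pow_succ]

theorem expansion_sub_expansion_eq_choose (k : ℕ) (m : ℤ) :
    (if 0 ≤ m then coeff m.toNat ((mk fun _ => (1 : R)) ^ (k + 1)) else 0) -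
      (if m ≤ 0 then coeff (-m).toNat ((-(X * mk fun _ => (1 : R))) ^ (k + 1)) else 0) =
    ((Ring.choose (m + k) k : ℤ) : R) := by
  rcases m with a | j
  · rw [Int.ofNat_eq_natCast, ← Nat.cast_add, Ring.choose_natCast, if_pos (by positivity),
      Int.toNat_natCast, coeff_mk_one_pow_succ, add_comm k]
    split_ifs with ha
    · rw [show (-(a : ℤ)).toNat = 0 by omega, coeff_zero_neg_X_mul_mk_one_pow_succ, sub_zero,
        Int.cast_natCast]
    · rw [sub_zero, Int.cast_natCast]
  · have hm : Int.negSucc j + k = (k : ℤ) - (j + 1) := by omega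
    rw [if_neg (by omega), if_pos (by omega), show (-Int.negSucc j).toNat = j + 1 by omega,
      coeff_succ_neg_X_mul_mk_one_pow_succ, hm, Ring.choose_natCast_sub_succ]
    push_cast
    ring

end Expansions

/-- For every `n ≥ 1`, the difference between the expansion of `(1/(1-z))ⁿ` around `0`
(the `n`-th power of `Σ_{m≥0} z^m ∈ F[[z]]`) and its expansion around `∞`
(the `n`-th power of `-Σ_{m≥1} z^{-m}`, i.e. of `-(w + w² + ⋯)` in the variable `w = z⁻¹`)
equals `δ^{(n-1)}(z)/(n-1)!`, where `δ(z) = Σ_{m∈ℤ} z^m`. -/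
theorem stmt4 {F : Type*} [Field F] [CharZero F] (n : ℕ) (hn : 1 ≤ n) (m : ℤ) :
    (if 0 ≤ m then
        PowerSeries.coeff m.toNat ((PowerSeries.mk fun _ => (1 : F)) ^ n)
      else 0) -
      (if m ≤ 0 then
        PowerSeries.coeff (-m).toNat
          ((-(PowerSeries.X * PowerSeries.mk fun _ => (1 : F))) ^ n)
      else 0) =
    (Dop^[n - 1] (fun _ => (1 : F))) m / (Nat.factorial (n - 1) : F) := by
  obtain ⟨k, rfl⟩ : ∃ k, n = k + 1 := ⟨n - 1, (Nat.succ_pred_eq_of_pos hn).symm⟩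
  have hfac : (k.factorial : F) ≠ 0 := Nat.cast_ne_zero.mpr k.factorial_ne_zero
  rw [expansion_sub_expansion_eq_choose, Nat.add_sub_cancel, Dop_iterate_one_apply,
    ascPochhammer_eval_add_one_eq_factorial_mul_choose, Int.cast_mul, Int.cast_natCast,
    mul_div_cancel_left₀ _ hfac]
end

section
/- With notation as in the previous statement, for p = 2 one has in F[[z,z⁻¹]]: (G⁺₁₀(zq²)·G⁺₁₁(zq⁻²) - G⁻₁₀(z⁻¹q⁻²)·G⁻₁₁(z⁻¹q²))/(q-q⁻¹)² = [2]_q² · (δ(z) - δ'(z)), where δ'(z) = Σ_{m∈ℤ} m·z^{m-1} is the formal derivative of δ. -/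
/-!
After the substitution `z ↦ zq^{-c}`, the series `G⁺(z)` with Cartan integer `c` has constant
term `q^c` and all higher coefficients equal to `q^c - q^{-c}`.  The product of two series with
constant tails has coefficients affine in the degree: here the `n`-th coefficient of
`G⁺₁₀(zq²)·G⁺₁₁(zq⁻²)` is `δ_{n0} - n (q² - q⁻²)²`.  The constant terms cancel between the
expansions at `0` and `∞`, leaving `-m (q² - q⁻²)² = -m (q - q⁻¹)² [2]_q²` in degree `m`.
-/

open PowerSeries

/-- The quantum integer `[n]_q = (qⁿ - q⁻ⁿ)/(q - q⁻¹)` in `F = K(q)`, `q = X`. -/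
noncomputable def qnum (K : Type*) [Field K] (n : ℤ) : RatFunc K :=
  ((RatFunc.X : RatFunc K) ^ n - (RatFunc.X : RatFunc K) ^ (-n)) /
    ((RatFunc.X : RatFunc K) - (RatFunc.X : RatFunc K)⁻¹)

/-- The power series `G⁺` attached to a Cartan integer `c`, i.e. the expansion of
`(zq^{-c}-1)/(z - q^{-c})` at `z = 0`; the expansion `G⁻` at `∞` (in the variable `z⁻¹`)
is `Gser K (-c)`.  In type `ȧ₁`, `G^±₁₀ = Gser K (∓2)` and `G^±₁₁ = Gser K (±2)`. -/
noncomputable def Gser (K : Type*) [Field K] (c : ℤ) : PowerSeries (RatFunc K) :=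
  PowerSeries.mk fun m =>
    if m = 0 then (RatFunc.X : RatFunc K) ^ c
    else ((RatFunc.X : RatFunc K) - (RatFunc.X : RatFunc K)⁻¹) * qnum K c *
      (RatFunc.X : RatFunc K) ^ (c * (m : ℤ))

namespace PowerSeries

theorem coeff_succ_mul_of_coeff_eq_ite {R : Type*} [CommSemiring R] {f g : R⟦X⟧}
    {a α b β : R} (hf : ∀ i, coeff i f = if i = 0 then a else α)
    (hg : ∀ j, coeff j g = if j = 0 then b else β) (n : ℕ) :
    coeff (n + 1) (f * g) = a * β + α * b + n * (α * β) := by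
  have middle : ∀ k ∈ Finset.range n, coeff (k + 1) f * coeff (n + 1 - (k + 1)) g = α * β := by
    intro k hk
    rw [hf, hg, if_neg k.succ_ne_zero, if_neg (by simp at hk; omega)]
  rw [coeff_mul, Finset.Nat.sum_antidiagonal_eq_sum_range_succ_mk, Finset.sum_range_succ,
    Finset.sum_range_succ', Finset.sum_congr rfl middle, Finset.sum_const, Finset.card_range,
    nsmul_eq_mul, hf, hf, hg, hg]
  simp only [Nat.sub_zero, Nat.sub_self, if_pos, if_neg n.succ_ne_zero]
  ring

theorem coeff_toNat_sub_coeff_neg_toNat {R : Type*} [CommRing R] {P : R⟦X⟧} {d : R}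
    (hP : ∀ n, coeff n P = if n = 0 then 1 else -(n : R) * d) (m : ℤ) :
    ((if 0 ≤ m then coeff m.toNat P else 0) - if m ≤ 0 then coeff (-m).toNat P else 0) =
      -m * d := by
  rcases lt_trichotomy m 0 with hm | rfl | hm
  · rw [if_neg hm.not_ge, if_pos hm.le, hP, if_neg (by omega), ← Int.cast_natCast,
      Int.toNat_of_nonneg (by omega)]
    push_cast
    ring
  · simp
  · rw [if_pos hm.le, if_neg hm.not_ge, hP, if_neg (by omega), ← Int.cast_natCast,
      Int.toNat_of_nonneg hm.le]
    ring

end PowerSeries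

section

variable {K : Type*} [Field K]

theorem RatFunc.X_sub_X_inv_ne_zero : (RatFunc.X : RatFunc K) - RatFunc.X⁻¹ ≠ 0 := by
  intro h
  have hX : (RatFunc.X : RatFunc K) ≠ 0 := RatFunc.X_ne_zero
  have h2 : algebraMap (Polynomial K) (RatFunc K) (Polynomial.X ^ 2 - Polynomial.C 1) = 0 := by
    rw [map_sub, map_pow, RatFunc.algebraMap_X, RatFunc.algebraMap_C, map_one]
    linear_combination RatFunc.X * h + mul_inv_cancel₀ hX
  exact RatFunc.algebraMap_ne_zero (Polynomial.X_pow_sub_C_ne_zero two_pos 1) h2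

theorem X_sub_X_inv_mul_qnum (c : ℤ) :
    ((RatFunc.X : RatFunc K) - RatFunc.X⁻¹) * qnum K c = RatFunc.X ^ c - RatFunc.X ^ (-c) :=
  mul_div_cancel₀ _ RatFunc.X_sub_X_inv_ne_zero

theorem coeff_rescale_Gser (c : ℤ) (i : ℕ) :
    coeff i (rescale ((RatFunc.X : RatFunc K) ^ (-c)) (Gser K c)) =
      if i = 0 then RatFunc.X ^ c else RatFunc.X ^ c - RatFunc.X ^ (-c) := by
  rw [coeff_rescale, Gser, coeff_mk]
  split_ifs with hi
  · simp [hi]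
  · rw [X_sub_X_inv_mul_qnum, ← zpow_natCast, ← zpow_mul, mul_left_comm,
      ← zpow_add₀ RatFunc.X_ne_zero]
    simp

theorem coeff_rescale_Gser_mul_rescale_Gser (n : ℕ) :
    coeff n (rescale ((RatFunc.X : RatFunc K) ^ (2 : ℤ)) (Gser K (-2)) *
        rescale ((RatFunc.X : RatFunc K) ^ (-2 : ℤ)) (Gser K 2)) =
      if n = 0 then 1 else -(n : RatFunc K) * (RatFunc.X ^ (2 : ℤ) - RatFunc.X ^ (-2 : ℤ)) ^ 2 := by
  have hf := coeff_rescale_Gser (K := K) (-2)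
  have hg := coeff_rescale_Gser (K := K) 2
  rw [neg_neg] at hf
  cases n with
  | zero =>
    rw [coeff_mul, Finset.Nat.antidiagonal_zero, Finset.sum_singleton, hf, hg, if_pos rfl,
      if_pos rfl, if_pos rfl, zpow_neg_mul_zpow_self _ RatFunc.X_ne_zero]
  | succ n =>
    rw [coeff_succ_mul_of_coeff_eq_ite hf hg, if_neg n.succ_ne_zero]
    push_cast
    ring

end

/-- Read coefficientwise: the coefficient of `z^m` in `δ(z)` is `1` and in
`δ'(z) = Σ_{m∈ℤ} m z^{m-1}` it is `m+1`; the second product is the expansion at `∞`, in `z⁻¹`. -/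
theorem stmt16_general {K : Type*} [Field K] (m : ℤ) :
    ((if 0 ≤ m then
        PowerSeries.coeff (R := RatFunc K) m.toNat
          (PowerSeries.rescale ((RatFunc.X : RatFunc K) ^ (2 : ℤ)) (Gser K (-2)) *
            PowerSeries.rescale ((RatFunc.X : RatFunc K) ^ (-2 : ℤ)) (Gser K 2))
      else 0) -
      (if m ≤ 0 then
        PowerSeries.coeff (R := RatFunc K) (-m).toNat
          (PowerSeries.rescale ((RatFunc.X : RatFunc K) ^ (-2 : ℤ)) (Gser K 2) *
            PowerSeries.rescale ((RatFunc.X : RatFunc K) ^ (2 : ℤ)) (Gser K (-2)))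
      else 0)) /
      ((RatFunc.X : RatFunc K) - (RatFunc.X : RatFunc K)⁻¹) ^ 2 =
    qnum K 2 ^ 2 * ((1 : RatFunc K) - ((m + 1 : ℤ) : RatFunc K)) := by
  rw [mul_comm (rescale _ (Gser K 2)),
    coeff_toNat_sub_coeff_neg_toNat coeff_rescale_Gser_mul_rescale_Gser, mul_div_assoc, ← div_pow]
  change _ * qnum K 2 ^ 2 = _
  push_cast
  ring

/-- Proposition A.5.i of the paper, case `p = 2`.  In `F[[z,z⁻¹]]`:
`(G⁺₁₀(zq²)·G⁺₁₁(zq⁻²) - G⁻₁₀(z⁻¹q⁻²)·G⁻₁₁(z⁻¹q²))/(q-q⁻¹)² = [2]_q²·(δ(z) - δ'(z))`,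
stated coefficientwise: the coefficient of `z^m` in `δ(z)` is `1` and in
`δ'(z) = Σ_{m∈ℤ} m z^{m-1}` it is `m+1`. -/
theorem stmt16 {K : Type*} [Field K] [CharZero K] (m : ℤ) :
    ((if 0 ≤ m then
        PowerSeries.coeff (R := RatFunc K) m.toNat
          (PowerSeries.rescale ((RatFunc.X : RatFunc K) ^ (2 : ℤ)) (Gser K (-2)) *
            PowerSeries.rescale ((RatFunc.X : RatFunc K) ^ (-2 : ℤ)) (Gser K 2))
      else 0) -
      (if m ≤ 0 then
        PowerSeries.coeff (R := RatFunc K) (-m).toNat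
          (PowerSeries.rescale ((RatFunc.X : RatFunc K) ^ (-2 : ℤ)) (Gser K 2) *
            PowerSeries.rescale ((RatFunc.X : RatFunc K) ^ (2 : ℤ)) (Gser K (-2)))
      else 0)) /
      ((RatFunc.X : RatFunc K) - (RatFunc.X : RatFunc K)⁻¹) ^ 2 =
    qnum K 2 ^ 2 * ((1 : RatFunc K) - ((m + 1 : ℤ) : RatFunc K)) :=
  stmt16_general m
end
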